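/- arXiv:2202.00141 — 2 statements merged into one kernel-verified Lean document; each statement's English description precedes it below -/
import Mathlib

section
/- Quadratic-form representation of the Wald statistic (Pitarakis form): let X₁ and X₂ be T×p real matrices with X₁ᵀX₂ = 0, set X = X₁ + X₂, and assume X₁ᵀX₁, X₂ᵀX₂ and XᵀX are invertible. Let θ ∈ ℝ^p, ε ∈ ℝ^T, y = Xθ + ε, θ̂ᵢ = (XᵢᵀXᵢ)^{−1}Xᵢᵀy for i = 1,2, and set M = X₁ᵀX₁ − X₁ᵀX₁ (XᵀX)^{−1} X₁ᵀX₁. Then M is invertible and (θ̂₁ − θ̂₂)ᵀ [ (X₁ᵀX₁)^{−1} + (X₂ᵀX₂)^{−1} ]^{−1} (θ̂₁ − θ̂₂) = [ εᵀX₁ − εᵀX (XᵀX)^{−1} X₁ᵀX₁ ] M^{−1} [ X₁ᵀε − X₁ᵀX₁ (XᵀX)^{−1} Xᵀε ]. -/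
open Matrix

/-- Quadratic-form representation of the Wald statistic (Pitarakis form). -/
theorem wald_quadratic_form_pitarakis
    {T p : ℕ} (X₁ X₂ : Matrix (Fin T) (Fin p) ℝ)
    (horth : X₁ᵀ * X₂ = 0)
    (X : Matrix (Fin T) (Fin p) ℝ) (hX : X = X₁ + X₂)
    (h1 : IsUnit (X₁ᵀ * X₁)) (h2 : IsUnit (X₂ᵀ * X₂)) (hXX : IsUnit (Xᵀ * X))
    (θ : Fin p → ℝ) (ε : Fin T → ℝ)
    (y : Fin T → ℝ) (hy : y = X *ᵥ θ + ε)
    (θhat₁ θhat₂ : Fin p → ℝ)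
    (hθ1 : θhat₁ = (X₁ᵀ * X₁)⁻¹ *ᵥ (X₁ᵀ *ᵥ y))
    (hθ2 : θhat₂ = (X₂ᵀ * X₂)⁻¹ *ᵥ (X₂ᵀ *ᵥ y))
    (M : Matrix (Fin p) (Fin p) ℝ)
    (hM : M = X₁ᵀ * X₁ - X₁ᵀ * X₁ * (Xᵀ * X)⁻¹ * (X₁ᵀ * X₁)) :
    IsUnit M ∧
    (θhat₁ - θhat₂) ⬝ᵥ (((X₁ᵀ * X₁)⁻¹ + (X₂ᵀ * X₂)⁻¹)⁻¹ *ᵥ (θhat₁ - θhat₂))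
      = (ε ᵥ* X₁ - (ε ᵥ* X) ᵥ* ((Xᵀ * X)⁻¹ * (X₁ᵀ * X₁)))
          ⬝ᵥ (M⁻¹ *ᵥ (X₁ᵀ *ᵥ ε - (X₁ᵀ * X₁) *ᵥ ((Xᵀ * X)⁻¹ *ᵥ (Xᵀ *ᵥ ε)))) := by
  have hdA : IsUnit (X₁ᵀ * X₁).det := (Matrix.isUnit_iff_isUnit_det _).mp h1
  have hdB : IsUnit (X₂ᵀ * X₂).det := (Matrix.isUnit_iff_isUnit_det _).mp h2
  have hdS : IsUnit (Xᵀ * X).det := (Matrix.isUnit_iff_isUnit_det _).mp hXX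
  set A := X₁ᵀ * X₁ with hA
  set B := X₂ᵀ * X₂ with hB
  set S := Xᵀ * X with hSdef
  have horth' : X₂ᵀ * X₁ = 0 := by
    have h := congrArg Matrix.transpose horth
    simpa [Matrix.transpose_mul] using h
  have hS : S = A + B := by
    rw [hSdef, hX, transpose_add, Matrix.add_mul, Matrix.mul_add, Matrix.mul_add,
      horth, horth']
    simp [hA, hB]
  have hAinvA : A⁻¹ * A = 1 := Matrix.nonsing_inv_mul A hdA
  have hAAinv : A * A⁻¹ = 1 := Matrix.mul_nonsing_inv A hdA
  have hBinvB : B⁻¹ * B = 1 := Matrix.nonsing_inv_mul B hdB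
  have hBBinv : B * B⁻¹ = 1 := Matrix.mul_nonsing_inv B hdB
  have hSinvS : S⁻¹ * S = 1 := Matrix.nonsing_inv_mul S hdS
  have hSSinv : S * S⁻¹ = 1 := Matrix.mul_nonsing_inv S hdS
  have hAT : Aᵀ = A := by rw [hA, transpose_mul, transpose_transpose]
  have hST : Sᵀ = S := by rw [hSdef, transpose_mul, transpose_transpose]
  have hSinvT : (S⁻¹)ᵀ = S⁻¹ := by rw [Matrix.transpose_nonsing_inv, hST]
  have hAeq : A = S - B := by rw [hS]; abel
  have hBeq : B = S - A := by rw [hS]; abel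
  have hX1X : X₁ᵀ * X = A := by rw [hX, Matrix.mul_add, horth, add_zero, hA]
  have hBSA : B * S⁻¹ * A = B - B * S⁻¹ * B := by
    conv_lhs => rw [hAeq]
    rw [mul_sub, mul_assoc B S⁻¹ S, hSinvS, mul_one]
  have hASB : A * S⁻¹ * B = B - B * S⁻¹ * B := by
    conv_lhs => rw [hAeq]
    rw [sub_mul, sub_mul, hSSinv, one_mul]
  have hASA : A * S⁻¹ * A = A - A * S⁻¹ * B := by
    conv_lhs => rw [show A * S⁻¹ * A = A * S⁻¹ * (S - B) from by rw [← hAeq]]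
    rw [mul_sub, mul_assoc A S⁻¹ S, hSinvS, mul_one]
  have hMeq : M = A * S⁻¹ * B := by rw [hM, hASA, sub_sub_cancel]
  have hMeq' : M = B * S⁻¹ * A := by rw [hMeq, hASB, ← hBSA]
  have hSinvU : IsUnit (S⁻¹) := ⟨⟨S⁻¹, S, hSinvS, hSSinv⟩, rfl⟩
  have hMunit : IsUnit M := by rw [hMeq]; exact (h1.mul hSinvU).mul h2
  have hdM : IsUnit M.det := (Matrix.isUnit_iff_isUnit_det _).mp hMunit
  refine ⟨hMunit, ?_⟩
  -- the middle matrix equals M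
  have hmid : (A⁻¹ + B⁻¹)⁻¹ = M := by
    have hsum : A⁻¹ + B⁻¹ = A⁻¹ * S * B⁻¹ := by
      rw [hS, mul_add, hAinvA, add_mul, one_mul, mul_assoc, hBBinv, mul_one, add_comm]
    rw [hsum, Matrix.mul_inv_rev, Matrix.mul_inv_rev,
      Matrix.nonsing_inv_nonsing_inv A hdA, Matrix.nonsing_inv_nonsing_inv B hdB,
      hMeq', ← mul_assoc]
  -- vectors
  set u := X₁ᵀ *ᵥ ε with hu
  set v := X₂ᵀ *ᵥ ε with hv
  have hXeps : Xᵀ *ᵥ ε = u + v := by rw [hX, transpose_add, add_mulVec]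
  have hd1 : θhat₁ = θ + A⁻¹ *ᵥ u := by
    rw [hθ1, hy, mulVec_add, mulVec_mulVec, hX1X, mulVec_add, mulVec_mulVec,
      hAinvA, one_mulVec]
  have hX2X : X₂ᵀ * X = B := by rw [hX, Matrix.mul_add, horth', zero_add, hB]
  have hd2 : θhat₂ = θ + B⁻¹ *ᵥ v := by
    rw [hθ2, hy, mulVec_add, mulVec_mulVec, hX2X, mulVec_add, mulVec_mulVec,
      hBinvB, one_mulVec]
  have hdvec : θhat₁ - θhat₂ = A⁻¹ *ᵥ u - B⁻¹ *ᵥ v := by rw [hd1, hd2]; abel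
  -- the key vector identity
  have hw : M *ᵥ (θhat₁ - θhat₂) = u - (A * S⁻¹) *ᵥ (u + v) := by
    rw [hdvec, mulVec_sub, mulVec_mulVec u M A⁻¹, mulVec_mulVec v M B⁻¹]
    have e1 : M * A⁻¹ = 1 - A * S⁻¹ := by
      rw [hMeq', mul_assoc, hAAinv, mul_one]
      conv_lhs => rw [hBeq]
      rw [sub_mul, hSSinv]
    have e2 : M * B⁻¹ = A * S⁻¹ := by
      rw [hMeq, mul_assoc, hBBinv, mul_one]
    rw [e1, e2, sub_mulVec, one_mulVec, mulVec_add]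
    abel
  -- rewrite the RHS row and column vectors
  have hrow : ε ᵥ* X₁ - (ε ᵥ* X) ᵥ* (S⁻¹ * A) = u - (A * S⁻¹) *ᵥ (u + v) := by
    have h1' : ε ᵥ* X₁ = u := (mulVec_transpose X₁ ε).symm
    have h2' : ε ᵥ* X = u + v := by rw [← mulVec_transpose, hXeps]
    have h3' : (S⁻¹ * A)ᵀ = A * S⁻¹ := by rw [transpose_mul, hAT, hSinvT]
    rw [h1', h2', ← vecMul_transpose, ← h3', transpose_transpose]
  have hcol : X₁ᵀ *ᵥ ε - A *ᵥ (S⁻¹ *ᵥ (Xᵀ *ᵥ ε)) = u - (A * S⁻¹) *ᵥ (u + v) := by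
    rw [hXeps, mulVec_mulVec, ← hu]
  rw [hmid, hrow, hcol, ← hw, mulVec_mulVec, Matrix.nonsing_inv_mul M hdM,
    one_mulVec, dotProduct_comm]
end

section
/- Projection of the estimation error onto the partial sums (key lemma for the OLS-CUSUM limit in regression): fix s ∈ [0,1] and p ≥ 1. Let (x̃_t)_{t≥1} be a deterministic sequence in ℝ^{p−1} such that (i) (1/T)∑_{t=1}^{⌊Tr⌋} x̃_t → 0 as T → ∞ for every r ∈ [0,1], and (ii) (1/T)∑_{t=1}^{T} x̃_t x̃_tᵀ → Q̃ as T → ∞ for some positive definite (p−1)×(p−1) matrix Q̃. Set x_t = (1, x̃_tᵀ)ᵀ ∈ ℝ^p. Let (ε_t)_{t≥1} be independent identically distributed real random variables on a probability space with E[ε₁] = 0 and E[ε₁²] = σ² < ∞. For T large enough that G_T = ∑_{t=1}^T x_t x_tᵀ is invertible, define δ_T = G_T^{−1} ∑_{t=1}^T x_t ε_t (the OLS estimation error β̂_T − β). Then (1/√T) ∑_{t=1}^{⌊Ts⌋} x_tᵀ δ_T − (s/√T) ∑_{t=1}^T ε_t → 0 in probability as T → ∞. -/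
/-!
Put `v_T = ∑_{t<⌊Ts⌋} x_t`, `e₀ = (1, 0, …, 0)` and `c_T = v_T G_T⁻¹ − s e₀`. Since
`e₀ ⬝ x_t = 1`, the statistic equals `T^{-1/2} ∑_{t<T} (c_T ⬝ x_t) ε_t`, a weighted sum of
independent centred errors whose variance is `σ² c_Tᵀ (G_T / T) c_T`. The assumptions give
`G_T / T → A = [[1, 0], [0, Q]]` and `v_T / T → s e₀`; as `e₀ A = e₀`,
`c_T = (v_T / T) (G_T / T)⁻¹ − s e₀ → s e₀ A⁻¹ − s e₀ = 0`. So the variance tends to `0`, and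
Chebyshev's inequality concludes.
-/

open MeasureTheory ProbabilityTheory Filter Finset Matrix

namespace Matrix

variable {R : Type*} {n : ℕ}

theorem sum_cons {α ι : Type*} [AddCommMonoid α] (s : Finset ι) (a : ι → α)
    (u : ι → Fin n → α) :
    ∑ i ∈ s, vecCons (a i) (u i) = vecCons (∑ i ∈ s, a i) (∑ i ∈ s, u i) := by
  ext j
  refine j.cases ?_ fun j => ?_ <;> simp [Finset.sum_apply]

/-- The symmetric matrix `[[a, uᵀ], [u, M]]`. -/
def borderedMatrix (a : R) (u : Fin n → R) (M : Matrix (Fin n) (Fin n) R) :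
    Matrix (Fin (n + 1)) (Fin (n + 1)) R :=
  of (vecCons (vecCons a u) fun i => vecCons (u i) (M i))

theorem vecMulVec_cons_one [MulOneClass R] (u : Fin n → R) :
    vecMulVec (vecCons 1 u : Fin (n + 1) → R) (vecCons 1 u) =
      borderedMatrix 1 u (vecMulVec u u) := by
  ext i j
  refine i.cases (j.cases ?_ fun j => ?_) fun i => j.cases ?_ fun j => ?_ <;>
    simp [borderedMatrix, vecMulVec_apply]

theorem sum_borderedMatrix [AddCommMonoid R] {ι : Type*} (s : Finset ι) (a : ι → R)
    (u : ι → Fin n → R) (M : ι → Matrix (Fin n) (Fin n) R) :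
    ∑ i ∈ s, borderedMatrix (a i) (u i) (M i) =
      borderedMatrix (∑ i ∈ s, a i) (∑ i ∈ s, u i) (∑ i ∈ s, M i) := by
  ext i j
  refine i.cases (j.cases ?_ fun j => ?_) fun i => j.cases ?_ fun j => ?_ <;>
    simp [borderedMatrix, Matrix.sum_apply, Finset.sum_apply]

theorem smul_borderedMatrix [Mul R] (c a : R) (u : Fin n → R) (M : Matrix (Fin n) (Fin n) R) :
    c • borderedMatrix a u M = borderedMatrix (c * a) (c • u) (c • M) := by
  ext i j
  refine i.cases (j.cases ?_ fun j => ?_) fun i => j.cases ?_ fun j => ?_ <;>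
    simp [borderedMatrix]

theorem submatrix_succ_borderedMatrix (a : R) (u : Fin n → R) (M : Matrix (Fin n) (Fin n) R) :
    (borderedMatrix a u M).submatrix Fin.succ Fin.succ = M := by
  ext i j
  simp [borderedMatrix]

theorem det_borderedMatrix_zero [CommRing R] (a : R) (M : Matrix (Fin n) (Fin n) R) :
    (borderedMatrix a 0 M).det = a * M.det := by
  rw [det_succ_column_zero, Fin.sum_univ_succ, Fin.succAbove_zero, submatrix_succ_borderedMatrix]
  simp [borderedMatrix]

theorem cons_zero_vecMul_borderedMatrix [Semiring R] (b a : R) (u : Fin n → R)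
    (M : Matrix (Fin n) (Fin n) R) :
    vecCons b 0 ᵥ* borderedMatrix a u M = b • vecCons a u := by
  ext j
  refine j.cases ?_ fun j => ?_ <;>
    simp [vecMul, dotProduct, Fin.sum_univ_succ, borderedMatrix]

theorem _root_.Filter.Tendsto.borderedMatrix [TopologicalSpace R] {ι : Type*} {l : Filter ι}
    {a : ι → R} {u : ι → Fin n → R} {M : ι → Matrix (Fin n) (Fin n) R} {a₀ : R}
    {u₀ : Fin n → R} {M₀ : Matrix (Fin n) (Fin n) R} (ha : Tendsto a l (nhds a₀))
    (hu : Tendsto u l (nhds u₀)) (hM : Tendsto M l (nhds M₀)) :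
    Tendsto (fun i => borderedMatrix (a i) (u i) (M i)) l
      (nhds (borderedMatrix a₀ u₀ M₀)) :=
  tendsto_pi_nhds.2 fun i => i.cases (ha.finCons hu) fun i =>
    (tendsto_pi_nhds.1 hu i).finCons (tendsto_pi_nhds.1 hM i)

theorem inv_smul_of_ne_zero {K m : Type*} [Field K] [Fintype m] [DecidableEq m] {k : K}
    (hk : k ≠ 0) (A : Matrix m m K) : (k • A)⁻¹ = k⁻¹ • A⁻¹ := by
  by_cases hA : IsUnit A.det
  · exact inv_smul' A (Units.mk0 k hk) hA
  · have hkA : ¬IsUnit (k • A).det := by simpa [det_smul, hk] using hA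
    rw [nonsing_inv_apply_not_isUnit _ hA, nonsing_inv_apply_not_isUnit _ hkA, smul_zero]

end Matrix

theorem tendsto_vecMul_inv_sub_dotProduct_mulVec {𝕜 m ι : Type*} [NormedField 𝕜] [Fintype m]
    [DecidableEq m] {l : Filter ι} {B : ι → Matrix m m 𝕜} {A : Matrix m m 𝕜} {v : ι → m → 𝕜}
    {u : m → 𝕜} (hB : Tendsto B l (nhds A)) (hA : A.det ≠ 0) (hv : Tendsto v l (nhds u))
    (hu : u ᵥ* A = u) :
    Tendsto (fun i => (v i ᵥ* (B i)⁻¹ - u) ⬝ᵥ (B i *ᵥ (v i ᵥ* (B i)⁻¹ - u))) l (nhds 0) := by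
  have hinv : Tendsto (fun i => (B i)⁻¹) l (nhds A⁻¹) :=
    (continuousAt_matrix_inv A
      (NormedRing.inverse_continuousAt (Units.mk0 _ hA))).tendsto.comp hB
  have hu' : u ᵥ* A⁻¹ = u := by
    conv_lhs => rw [← hu]
    rw [vecMul_vecMul, mul_nonsing_inv _ (isUnit_iff_ne_zero.2 hA), vecMul_one]
  have hc : Tendsto (fun i => v i ᵥ* (B i)⁻¹ - u) l (nhds 0) := by
    have := (((continuous_fst.matrix_vecMul continuous_snd).tendsto (u, A⁻¹)).comp
      (hv.prodMk_nhds hinv)).sub_const u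
    rwa [Function.comp_def, hu', sub_self] at this
  have hquad : Continuous fun q : (m → 𝕜) × Matrix m m 𝕜 => q.1 ⬝ᵥ (q.2 *ᵥ q.1) :=
    continuous_fst.dotProduct (continuous_snd.matrix_mulVec continuous_fst)
  simpa only [zero_dotProduct, Function.comp_def] using
    (hquad.tendsto (0, A)).comp (hc.prodMk_nhds hB)

theorem tendsto_one_div_natCast_mul_floor_mul {s : ℝ} (hs : 0 ≤ s) :
    Tendsto (fun T : ℕ => 1 / (T : ℝ) * ⌊(T : ℝ) * s⌋₊) atTop (nhds s) := by
  have := (tendsto_nat_floor_mul_div_atTop hs).comp tendsto_natCast_atTop_atTop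
  simpa [Function.comp_def, mul_comm, div_eq_inv_mul] using this

theorem tendsto_one_div_natCast_mul_self :
    Tendsto (fun T : ℕ => 1 / (T : ℝ) * T) atTop (nhds 1) :=
  tendsto_const_nhds.congr' <| (eventually_ne_atTop 0).mono fun T hT => by field_simp

section Probability

variable {Ω : Type*} [MeasurableSpace Ω] {μ : Measure Ω}

theorem variance_sum_mul_of_iIndepFun {ι : Type*} {X : ι → Ω → ℝ}
    (hX : ∀ i, MemLp (X i) 2 μ) (hindep : iIndepFun X μ) (a : ι → ℝ) (s : Finset ι) :
    variance (fun ω => ∑ i ∈ s, a i * X i ω) μ = ∑ i ∈ s, a i ^ 2 * variance (X i) μ := by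
  have hsum : (fun ω => ∑ i ∈ s, a i * X i ω) = ∑ i ∈ s, fun ω => a i * X i ω := by
    ext ω; simp
  rw [hsum, IndepFun.variance_sum fun i _ => (hX i).const_mul (a i)]
  · simp only [variance_const_mul]
  · intro i _ j _ hij
    exact (hindep.indepFun hij).comp (measurable_const_mul _) (measurable_const_mul _)

theorem tendsto_measure_lt_abs_of_tendsto_variance [IsFiniteMeasure μ] {ι : Type*}
    {l : Filter ι} {Z : ι → Ω → ℝ} (hZ : ∀ i, MemLp (Z i) 2 μ) (hmean : ∀ i, μ[Z i] = 0)
    (hvar : Tendsto (fun i => variance (Z i) μ) l (nhds 0)) {η : ℝ} (hη : 0 < η) :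
    Tendsto (fun i => μ {ω | η < |Z i ω|}) l (nhds 0) := by
  have hbound : Tendsto (fun i => ENNReal.ofReal (variance (Z i) μ / η ^ 2)) l (nhds 0) := by
    simpa using ENNReal.tendsto_ofReal (hvar.div_const (η ^ 2))
  refine tendsto_of_tendsto_of_tendsto_of_le_of_le tendsto_const_nhds hbound (fun _ => zero_le)
    fun i => ?_
  calc μ {ω | η < |Z i ω|} ≤ μ {ω | η ≤ |Z i ω - μ[Z i]|} :=
        measure_mono fun ω hω => by simpa [hmean i] using hω.le
    _ ≤ _ := meas_ge_le_variance_div_sq (hZ i) hη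

theorem tendsto_measure_lt_abs_sum_mul_of_iIndepFun [IsFiniteMeasure μ] {κ ι : Type*}
    {l : Filter ι} {ε : κ → Ω → ℝ} (hindep : iIndepFun ε μ) (hε : ∀ t, MemLp (ε t) 2 μ)
    (hmean : ∀ t, μ[ε t] = 0) {C : ℝ} (hvar : ∀ t, variance (ε t) μ ≤ C) {S : ι → Finset κ}
    {a : ι → κ → ℝ} (ha : Tendsto (fun i => ∑ t ∈ S i, a i t ^ 2) l (nhds 0)) {η : ℝ}
    (hη : 0 < η) :
    Tendsto (fun i => μ {ω | η < |∑ t ∈ S i, a i t * ε t ω|}) l (nhds 0) := by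
  refine tendsto_measure_lt_abs_of_tendsto_variance
    (fun i => memLp_finsetSum _ fun t _ => (hε t).const_mul _) (fun i => ?_) ?_ hη
  · simp [integral_finsetSum _ fun t _ => ((hε t).integrable one_le_two).const_mul _,
      integral_const_mul, hmean]
  · refine tendsto_of_tendsto_of_tendsto_of_le_of_le tendsto_const_nhds
      (by simpa using ha.const_mul C) (fun i => variance_nonneg _ _) fun i => ?_
    rw [variance_sum_mul_of_iIndepFun hε hindep, mul_sum]
    exact sum_le_sum fun t _ => by
      rw [mul_comm C]; exact mul_le_mul_of_nonneg_left (hvar t) (sq_nonneg _)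

end Probability

theorem dotProduct_sum_vecMulVec_mulVec {m ι R : Type*} [Fintype m] [CommSemiring R]
    (c : m → R) (x : ι → m → R) (S : Finset ι) :
    c ⬝ᵥ ((∑ t ∈ S, vecMulVec (x t) (x t)) *ᵥ c) = ∑ t ∈ S, (c ⬝ᵥ x t) ^ 2 := by
  simp only [dotProduct_mulVec, vecMul_sum, vecMul_vecMulVec, sum_dotProduct, smul_dotProduct,
    smul_eq_mul, dotProduct_comm (x _) c, sq]

theorem sum_dotProduct_mulVec_sum_smul_sub {m ι R : Type*} [Fintype m] [CommRing R]
    (M : Matrix m m R) (x : ι → m → R) (w : ι → R) {u : m → R} {s : R}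
    (hu : ∀ t, u ⬝ᵥ x t = s) (S S' : Finset ι) :
    ∑ t ∈ S, x t ⬝ᵥ (M *ᵥ ∑ t ∈ S', w t • x t) - s * ∑ t ∈ S', w t =
      ∑ t ∈ S', ((∑ t ∈ S, x t) ᵥ* M - u) ⬝ᵥ x t * w t := by
  rw [← sum_dotProduct, dotProduct_mulVec, dotProduct_sum, mul_sum, ← sum_sub_distrib]
  refine sum_congr rfl fun t _ => ?_
  rw [dotProduct_smul, sub_dotProduct, hu, smul_eq_mul]
  ring

theorem tendsto_inv_smul_sum_vecMulVec_cons_one {n : ℕ} {y : ℕ → Fin n → ℝ}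
    {Q : Matrix (Fin n) (Fin n) ℝ}
    (hy : Tendsto (fun T : ℕ => (1 / (T : ℝ)) • ∑ t ∈ range T, y t) atTop (nhds 0))
    (hQ : Tendsto (fun T : ℕ => (1 / (T : ℝ)) • ∑ t ∈ range T, vecMulVec (y t) (y t)) atTop
      (nhds Q)) :
    Tendsto (fun T : ℕ => (1 / (T : ℝ)) •
        ∑ t ∈ range T, vecMulVec (vecCons 1 (y t)) (vecCons 1 (y t)))
      atTop (nhds (borderedMatrix 1 0 Q)) := by
  simp only [vecMulVec_cons_one, sum_borderedMatrix, smul_borderedMatrix, sum_const, card_range,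
    nsmul_eq_mul, mul_one]
  exact tendsto_one_div_natCast_mul_self.borderedMatrix hy hQ

theorem tendsto_inv_smul_sum_range_floor_cons_one {n : ℕ} {y : ℕ → Fin n → ℝ} {s : ℝ}
    (hs : 0 ≤ s)
    (hy : Tendsto (fun T : ℕ => (1 / (T : ℝ)) • ∑ t ∈ range ⌊(T : ℝ) * s⌋₊, y t) atTop
      (nhds 0)) :
    Tendsto (fun T : ℕ => (1 / (T : ℝ)) • ∑ t ∈ range ⌊(T : ℝ) * s⌋₊, vecCons 1 (y t)) atTop
      (nhds (vecCons s 0)) := by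
  simp only [Matrix.sum_cons, smul_cons, sum_const, card_range, nsmul_eq_mul, mul_one,
    smul_eq_mul]
  exact (tendsto_one_div_natCast_mul_floor_mul hs).finCons hy

theorem ols_error_projection_onto_partial_sums_general
    {Ω : Type*} [MeasurableSpace Ω] (μ : Measure Ω) [IsProbabilityMeasure μ]
    (s : ℝ) (hs : s ∈ Set.Icc (0 : ℝ) 1)
    (p' : ℕ) (xt : ℕ → Fin p' → ℝ)
    (hcesaro : ∀ r ∈ Set.Icc (0 : ℝ) 1,
      Tendsto (fun T : ℕ => (1 / (T : ℝ)) • ∑ t ∈ Finset.range ⌊(T : ℝ) * r⌋₊, xt t)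
        atTop (nhds 0))
    (Q : Matrix (Fin p') (Fin p') ℝ) (hQ : Q.PosDef)
    (hsecond : Tendsto
      (fun T : ℕ => (1 / (T : ℝ)) • ∑ t ∈ Finset.range T, Matrix.vecMulVec (xt t) (xt t))
      atTop (nhds Q))
    (x : ℕ → Fin (p' + 1) → ℝ) (hx : ∀ t, x t = Fin.cons 1 (xt t))
    (ε : ℕ → Ω → ℝ)
    (hindep : iIndepFun ε μ)
    (hident : ∀ t, IdentDistrib (ε t) (ε 0) μ μ)
    (hL2 : MemLp (ε 0) 2 μ)
    (hmean : ∫ ω, ε 0 ω ∂μ = 0)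
    (G : ℕ → Matrix (Fin (p' + 1)) (Fin (p' + 1)) ℝ)
    (hG : ∀ T, G T = ∑ t ∈ Finset.range T, Matrix.vecMulVec (x t) (x t))
    (δ : ℕ → Ω → Fin (p' + 1) → ℝ)
    (hδ : ∀ T ω, δ T ω = (G T)⁻¹ *ᵥ (∑ t ∈ Finset.range T, ε t ω • x t)) :
    ∀ η > (0 : ℝ),
      Tendsto (fun T : ℕ =>
          μ {ω | η < |(1 / Real.sqrt T) * ∑ t ∈ Finset.range ⌊(T : ℝ) * s⌋₊, x t ⬝ᵥ δ T ω
                    - (s / Real.sqrt T) * ∑ t ∈ Finset.range T, ε t ω|})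
        atTop (nhds 0) := by
  intro η hη
  obtain rfl : x = fun t => vecCons 1 (xt t) := funext hx
  set c : ℕ → Fin (p' + 1) → ℝ :=
    fun T => (∑ t ∈ range ⌊(T : ℝ) * s⌋₊, vecCons 1 (xt t)) ᵥ* (G T)⁻¹ - vecCons s 0
  have hB : Tendsto (fun T : ℕ => (1 / (T : ℝ)) • G T) atTop (nhds (borderedMatrix 1 0 Q)) := by
    simp only [hG]
    exact tendsto_inv_smul_sum_vecMulVec_cons_one
      (by simpa using hcesaro 1 ⟨zero_le_one, le_rfl⟩) hsecond
  have hquad : Tendsto (fun T : ℕ => c T ⬝ᵥ (((1 / (T : ℝ)) • G T) *ᵥ c T)) atTop (nhds 0) := by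
    refine (tendsto_vecMul_inv_sub_dotProduct_mulVec hB
      (by simpa [det_borderedMatrix_zero] using hQ.det_pos.ne')
      (tendsto_inv_smul_sum_range_floor_cons_one hs.1 (hcesaro s hs)) ?_).congr' ?_
    · simp [cons_zero_vecMul_borderedMatrix]
    · filter_upwards [eventually_ne_atTop 0] with T hT
      rw [inv_smul_of_ne_zero (by positivity), smul_vecMul, vecMul_smul, smul_smul,
        mul_inv_cancel₀ (by positivity), one_smul]
  have hweights : ∀ T : ℕ, ∑ t ∈ range T, (c T ⬝ᵥ vecCons 1 (xt t) / √T) ^ 2 =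
      c T ⬝ᵥ (((1 / (T : ℝ)) • G T) *ᵥ c T) := fun T => by
    simp only [smul_mulVec, dotProduct_smul, hG, dotProduct_sum_vecMulVec_mulVec, div_pow,
      Real.sq_sqrt (Nat.cast_nonneg _), smul_eq_mul, mul_sum]
    exact sum_congr rfl fun t _ => by ring
  have hε : ∀ t, MemLp (ε t) 2 μ := fun t => (hident t).memLp_iff.2 hL2
  refine (tendsto_measure_lt_abs_sum_mul_of_iIndepFun hindep hε
    (fun t => by rw [(hident t).integral_eq, hmean]) (fun t => (hident t).variance_eq.le)
    (S := range) (a := fun T t => c T ⬝ᵥ vecCons 1 (xt t) / √T)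
    (by simpa only [hweights] using hquad) hη).congr fun T => ?_
  congr! 5 with ω
  rw [div_eq_mul_one_div s, mul_comm s, mul_assoc, ← mul_sub, hδ,
    sum_dotProduct_mulVec_sum_smul_sub _ _ _ (u := vecCons s 0) (by simp), mul_sum]
  exact sum_congr rfl fun t _ => by ring

/-- Projection of the OLS estimation error onto the partial sums: the key lemma for the
Brownian bridge limit of the OLS-CUSUM statistic in a linear regression with intercept.
With `x_t = (1, x̃_tᵀ)ᵀ`, Cesàro-negligible regressor partial sums, a positive definite
second-moment limit, and i.i.d. mean-zero square-integrable errors,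
`(1/√T) ∑_{t=1}^{⌊Ts⌋} x_tᵀ(β̂_T − β) − (s/√T) ∑_{t=1}^T ε_t → 0` in probability. -/
theorem ols_error_projection_onto_partial_sums
    {Ω : Type*} [MeasurableSpace Ω] (μ : Measure Ω) [IsProbabilityMeasure μ]
    (s : ℝ) (hs : s ∈ Set.Icc (0 : ℝ) 1)
    (p' : ℕ) (xt : ℕ → Fin p' → ℝ)
    (hcesaro : ∀ r ∈ Set.Icc (0 : ℝ) 1,
      Tendsto (fun T : ℕ => (1 / (T : ℝ)) • ∑ t ∈ Finset.range ⌊(T : ℝ) * r⌋₊, xt t)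
        atTop (nhds 0))
    (Q : Matrix (Fin p') (Fin p') ℝ) (hQ : Q.PosDef)
    (hsecond : Tendsto
      (fun T : ℕ => (1 / (T : ℝ)) • ∑ t ∈ Finset.range T, Matrix.vecMulVec (xt t) (xt t))
      atTop (nhds Q))
    (x : ℕ → Fin (p' + 1) → ℝ) (hx : ∀ t, x t = Fin.cons 1 (xt t))
    (ε : ℕ → Ω → ℝ) (σ2 : ℝ)
    (hindep : iIndepFun ε μ)
    (hmeas : ∀ t, Measurable (ε t))
    (hident : ∀ t, IdentDistrib (ε t) (ε 0) μ μ)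
    (hL2 : MemLp (ε 0) 2 μ)
    (hmean : ∫ ω, ε 0 ω ∂μ = 0)
    (hvar : ∫ ω, (ε 0 ω) ^ 2 ∂μ = σ2)
    (G : ℕ → Matrix (Fin (p' + 1)) (Fin (p' + 1)) ℝ)
    (hG : ∀ T, G T = ∑ t ∈ Finset.range T, Matrix.vecMulVec (x t) (x t))
    (δ : ℕ → Ω → Fin (p' + 1) → ℝ)
    (hδ : ∀ T ω, δ T ω = (G T)⁻¹ *ᵥ (∑ t ∈ Finset.range T, ε t ω • x t)) :
    ∀ η > (0 : ℝ),
      Tendsto (fun T : ℕ =>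
          μ {ω | η < |(1 / Real.sqrt T) * ∑ t ∈ Finset.range ⌊(T : ℝ) * s⌋₊, x t ⬝ᵥ δ T ω
                    - (s / Real.sqrt T) * ∑ t ∈ Finset.range T, ε t ω|})
        atTop (nhds 0) :=
  ols_error_projection_onto_partial_sums_general μ s hs p' xt hcesaro Q hQ hsecond x hx ε hindep
    hident hL2 hmean G hG δ hδ
end
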